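/- Let k ∈ (0,1) and n ∈ ℤ. The function g₄(u) = −E(u,k) + (1−k²)·F(u,k) + tan u·√(1−k²sin²u) is strictly increasing on the interval ((2n−1)π/2, (2n+1)π/2); moreover g₄(u) → −∞ as u → ((2n−1)π/2)⁺ and g₄(u) → +∞ as u → ((2n+1)π/2)⁻. (Monotonicity and boundary behaviour of g₄ = f₄/cn used to prove uniqueness of the roots of f₄.) -/

import Mathlib

/-!
Differentiating, `g₄'(u) = (1 - k²) / (cos² u · √(1 - k² sin² u))`, which is positive wherever
`cos u ≠ 0`, i.e. on each interval between consecutive poles of `tan`. At those poles the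
integral part `-E + (1 - k²) F` is continuous, while `√(1 - k² sin² u) → √(1 - k²) > 0`, so
`g₄` inherits the infinite limits of `tan`.
-/

open Real Filter

/-- Incomplete elliptic integral of the first kind in Legendre form:
`F(u,k) = ∫₀ᵘ dφ/√(1 − k² sin² φ)`. -/
noncomputable def EllF (u k : ℝ) : ℝ :=
  ∫ φ in (0:ℝ)..u, 1 / Real.sqrt (1 - k ^ 2 * Real.sin φ ^ 2)

/-- Incomplete elliptic integral of the second kind in Legendre form:
`E(u,k) = ∫₀ᵘ √(1 − k² sin² φ) dφ`. -/
noncomputable def EllE (u k : ℝ) : ℝ :=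
  ∫ φ in (0:ℝ)..u, Real.sqrt (1 - k ^ 2 * Real.sin φ ^ 2)

open Set Topology

/-- `g₄ = f₄ / cn`, in the amplitude variable `u`. -/
noncomputable def g4 (k u : ℝ) : ℝ :=
  -EllE u k + (1 - k ^ 2) * EllF u k + tan u * √(1 - k ^ 2 * sin u ^ 2)

lemma cos_ne_zero_of_mem_Ioo (n : ℤ) {u : ℝ}
    (hu : u ∈ Ioo ((2 * (n : ℝ) - 1) * π / 2) ((2 * (n : ℝ) + 1) * π / 2)) : cos u ≠ 0 := by
  intro hcos
  obtain ⟨m, rfl⟩ := cos_eq_zero_iff.mp hcos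
  obtain ⟨hlo, hhi⟩ := hu
  have hlo' : (n : ℝ) - 1 < m := by nlinarith [pi_pos]
  have hhi' : (m : ℝ) < n := by nlinarith [pi_pos]
  norm_cast at hlo' hhi'
  omega

lemma tendsto_tan_nhdsGT_odd_mul_pi_div_two (n : ℤ) :
    Tendsto tan (𝓝[>] ((2 * (n : ℝ) - 1) * π / 2)) atBot := by
  have hshift : (2 * (n : ℝ) - 1) * π / 2 - n * π = -(π / 2) := by ring
  have hsub : Tendsto (· - n * π) (𝓝[>] ((2 * (n : ℝ) - 1) * π / 2)) (𝓝[>] (-(π / 2))) :=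
    hshift ▸ map_subRight_nhdsGT.le
  exact (tendsto_tan_neg_pi_div_two.comp hsub).congr fun u => tan_sub_int_mul_pi u n

lemma tendsto_tan_nhdsLT_odd_mul_pi_div_two (n : ℤ) :
    Tendsto tan (𝓝[<] ((2 * (n : ℝ) + 1) * π / 2)) atTop := by
  have hshift : (2 * (n : ℝ) + 1) * π / 2 - n * π = π / 2 := by ring
  have hsub : Tendsto (· - n * π) (𝓝[<] ((2 * (n : ℝ) + 1) * π / 2)) (𝓝[<] (π / 2)) :=
    hshift ▸ map_subRight_nhdsLT.le
  exact (tendsto_tan_pi_div_two.comp hsub).congr fun u => tan_sub_int_mul_pi u n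

section

variable {k : ℝ}

lemma one_sub_sq_mul_sin_sq_pos (hk : k ^ 2 < 1) (u : ℝ) : 0 < 1 - k ^ 2 * sin u ^ 2 := by
  nlinarith [sin_sq_le_one u, sq_nonneg k]

lemma continuous_sqrt_one_sub_sq_mul_sin_sq (k : ℝ) :
    Continuous fun u : ℝ => √(1 - k ^ 2 * sin u ^ 2) := by
  fun_prop

lemma hasDerivAt_EllE (k u : ℝ) : HasDerivAt (EllE · k) √(1 - k ^ 2 * sin u ^ 2) u :=
  ((continuous_sqrt_one_sub_sq_mul_sin_sq k).integral_hasStrictDerivAt 0 u).hasDerivAt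

lemma hasDerivAt_EllF (hk : k ^ 2 < 1) (u : ℝ) :
    HasDerivAt (EllF · k) (1 / √(1 - k ^ 2 * sin u ^ 2)) u := by
  have hcont : Continuous fun u : ℝ => 1 / √(1 - k ^ 2 * sin u ^ 2) :=
    continuous_const.div (continuous_sqrt_one_sub_sq_mul_sin_sq k) fun u =>
      (sqrt_pos.mpr (one_sub_sq_mul_sin_sq_pos hk u)).ne'
  exact (hcont.integral_hasStrictDerivAt 0 u).hasDerivAt

lemma continuous_neg_EllE_add_mul_EllF (hk : k ^ 2 < 1) :
    Continuous fun u => -EllE u k + (1 - k ^ 2) * EllF u k :=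
  continuous_iff_continuousAt.mpr fun u =>
    (hasDerivAt_EllE k u).continuousAt.neg.add
      ((hasDerivAt_EllF hk u).continuousAt.const_mul _)

lemma hasDerivAt_g4 (hk : k ^ 2 < 1) {u : ℝ} (hu : cos u ≠ 0) :
    HasDerivAt (g4 k) ((1 - k ^ 2) / (√(1 - k ^ 2 * sin u ^ 2) * cos u ^ 2)) u := by
  have hΔ := one_sub_sq_mul_sin_sq_pos hk u
  have hsqrt : HasDerivAt (fun u : ℝ => √(1 - k ^ 2 * sin u ^ 2))
      (-(k ^ 2 * (2 * sin u ^ 1 * cos u)) / (2 * √(1 - k ^ 2 * sin u ^ 2))) u :=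
    ((((hasDerivAt_sin u).pow 2).const_mul (k ^ 2)).const_sub 1).sqrt hΔ.ne'
  refine (((hasDerivAt_EllE k u).neg.add ((hasDerivAt_EllF hk u).const_mul (1 - k ^ 2))).add
    ((hasDerivAt_tan hu).mul hsqrt)).congr_deriv ?_
  have hsqrt_pos := sqrt_pos.mpr hΔ
  rw [tan_eq_sin_div_cos]
  field_simp
  linear_combination (1 - cos u ^ 2) * sq_sqrt hΔ.le - k ^ 2 * sin_sq_add_cos_sq u

lemma tendsto_sqrt_one_sub_sq_mul_sin_sq_of_cos_eq_zero {x : ℝ} (hx : cos x = 0) :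
    Tendsto (fun u : ℝ => √(1 - k ^ 2 * sin u ^ 2)) (𝓝 x) (𝓝 √(1 - k ^ 2)) := by
  have hsin : sin x ^ 2 = 1 := by nlinarith [sin_sq_add_cos_sq x]
  simpa [hsin] using (continuous_sqrt_one_sub_sq_mul_sin_sq k).tendsto x

lemma tendsto_g4_atBot (hk : k ^ 2 < 1) {x : ℝ} (hx : cos x = 0) {l : Filter ℝ}
    (hl : l ≤ 𝓝 x) (htan : Tendsto tan l atBot) : Tendsto (g4 k) l atBot :=
  (((continuous_neg_EllE_add_mul_EllF hk).tendsto x).mono_left hl).add_atBot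
    (htan.atBot_mul_pos (sqrt_pos.mpr (by linarith))
      ((tendsto_sqrt_one_sub_sq_mul_sin_sq_of_cos_eq_zero hx).mono_left hl))

lemma tendsto_g4_atTop (hk : k ^ 2 < 1) {x : ℝ} (hx : cos x = 0) {l : Filter ℝ}
    (hl : l ≤ 𝓝 x) (htan : Tendsto tan l atTop) : Tendsto (g4 k) l atTop :=
  (((continuous_neg_EllE_add_mul_EllF hk).tendsto x).mono_left hl).add_atTop
    (htan.atTop_mul_pos (sqrt_pos.mpr (by linarith))
      ((tendsto_sqrt_one_sub_sq_mul_sin_sq_of_cos_eq_zero hx).mono_left hl))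

lemma strictMonoOn_g4 (hk : k ^ 2 < 1) (n : ℤ) :
    StrictMonoOn (g4 k) (Ioo ((2 * (n : ℝ) - 1) * π / 2) ((2 * (n : ℝ) + 1) * π / 2)) := by
  have hderiv := fun u (hu : u ∈ Ioo _ _) => hasDerivAt_g4 hk (cos_ne_zero_of_mem_Ioo n hu)
  refine strictMonoOn_of_hasDerivWithinAt_pos (convex_Ioo _ _)
    (fun u hu => (hderiv u hu).continuousAt.continuousWithinAt)
    (fun u hu => (hderiv u (interior_subset hu)).hasDerivWithinAt) fun u hu => ?_
  rw [interior_Ioo] at hu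
  have hcos := cos_ne_zero_of_mem_Ioo n hu
  have hsqrt := sqrt_pos.mpr (one_sub_sq_mul_sin_sq_pos hk u)
  have hk' : 0 < 1 - k ^ 2 := by linarith
  positivity

end

/-- For `k ∈ (0,1)` and `n ∈ ℤ`, the function
`g₄(u) = −E(u,k) + (1−k²)·F(u,k) + tan u·√(1 − k² sin² u)` is strictly increasing on
`((2n−1)π/2, (2n+1)π/2)`, tends to `−∞` as `u → ((2n−1)π/2)⁺` and to `+∞`
as `u → ((2n+1)π/2)⁻`. -/
theorem g4_strictMono_and_limits (k : ℝ) (hk : k ∈ Set.Ioo (0:ℝ) 1) (n : ℤ) :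
    StrictMonoOn
      (fun u : ℝ => -EllE u k + (1 - k ^ 2) * EllF u k +
        Real.tan u * Real.sqrt (1 - k ^ 2 * Real.sin u ^ 2))
      (Set.Ioo ((2 * (n:ℝ) - 1) * π / 2) ((2 * (n:ℝ) + 1) * π / 2)) ∧
    Tendsto (fun u : ℝ => -EllE u k + (1 - k ^ 2) * EllF u k +
        Real.tan u * Real.sqrt (1 - k ^ 2 * Real.sin u ^ 2))
      (nhdsWithin ((2 * (n:ℝ) - 1) * π / 2) (Set.Ioi ((2 * (n:ℝ) - 1) * π / 2))) atBot ∧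
    Tendsto (fun u : ℝ => -EllE u k + (1 - k ^ 2) * EllF u k +
        Real.tan u * Real.sqrt (1 - k ^ 2 * Real.sin u ^ 2))
      (nhdsWithin ((2 * (n:ℝ) + 1) * π / 2) (Set.Iio ((2 * (n:ℝ) + 1) * π / 2))) atTop := by
  have hk2 : k ^ 2 < 1 := by nlinarith [hk.1, hk.2]
  have hcos_lo : cos ((2 * (n : ℝ) - 1) * π / 2) = 0 :=
    cos_eq_zero_iff.mpr ⟨n - 1, by push_cast; ring⟩
  have hcos_hi : cos ((2 * (n : ℝ) + 1) * π / 2) = 0 := cos_eq_zero_iff.mpr ⟨n, rfl⟩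
  exact ⟨strictMonoOn_g4 hk2 n,
    tendsto_g4_atBot hk2 hcos_lo nhdsWithin_le_nhds (tendsto_tan_nhdsGT_odd_mul_pi_div_two n),
    tendsto_g4_atTop hk2 hcos_hi nhdsWithin_le_nhds (tendsto_tan_nhdsLT_odd_mul_pi_div_two n)⟩
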